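/- Let x in R^n and suppose for each i ∈ {1,...,n} we have n filters v ∈ P_i(x) such that the n filters in each S_{P_i} are linearly independent (notation as in the texture model). Define the Gram matrix G^y with entries ⟨ReLU(C(v_a) y), ReLU(C(v_b) y)⟩ over all filter pairs. If y ∈ R^n satisfies G^y = G^x, then y is a cyclic shift of x (i.e., y = Cs^m(x) for some m). -/

import Mathlib

open Matrix

/-- The cyclic shift sending `(x₁, …, xₙ)` to `(xₙ, x₁, …, xₙ₋₁)`. -/
def cycShift {n : ℕ} [NeZero n] (x : Fin n → ℝ) : Fin n → ℝ := fun i => x (i - 1)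

/-- The circulant matrix whose rows are the successive cyclic shifts of `x`. -/
def circMat {n : ℕ} [NeZero n] (x : Fin n → ℝ) : Matrix (Fin n) (Fin n) ℝ :=
  fun k j => x (j - k)

/-- `P i x`: the set of `v` such that exactly the `i`-th entry of `C(x) v` is
positive and all other entries are negative. -/
def Pset {n : ℕ} [NeZero n] (i : Fin n) (x : Fin n → ℝ) : Set (Fin n → ℝ) :=
  {v | 0 < (circMat x).mulVec v i ∧ ∀ j, j ≠ i → (circMat x).mulVec v j < 0}

/-- Entrywise ReLU. -/
def reluVec {n : ℕ} (u : Fin n → ℝ) : Fin n → ℝ := fun j => max (u j) 0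

/-!
Since `v_{ia} ∈ P_i(x)`, the vector `ReLU(C(v_{ia}) x)` is a single bump of height
`d_{ia} = (C(x) v_{ia})_i > 0` at `-i`, so the Gram matrix of `x` is block diagonal with blocks
`d_{ia} d_{ib}`. The vectors `ReLU(C(v_{ia}) y)` are nonnegative, so orthogonality across blocks
forces disjoint supports; `n` nonempty disjoint supports among `n` coordinates are singletons
`{g i}`, and the diagonal entries then give `(C(v_{0a}) y)_{g 0} = d_{0a}`, i.e.
`⟨v_{0a}, y(· + g 0)⟩ = ⟨v_{0a}, x⟩`. Since the `v_{0a}` form a basis, `y(· + g 0) = x`.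
-/

theorem exists_forall_iff_eq_of_card_le {ι α : Type*} [Finite α] (P : ι → α → Prop)
    (hcard : Nat.card α ≤ Nat.card ι) (hex : ∀ i, ∃ k, P i k)
    (huniq : ∀ i j k, P i k → P j k → i = j) : ∃ g : ι → α, ∀ i k, P i k ↔ k = g i := by
  choose g hg using hex
  have hinj : g.Injective := fun i j h => huniq i j (g i) (hg i) (h ▸ hg j)
  refine ⟨g, fun i k => ⟨fun hik => ?_, fun h => h ▸ hg i⟩⟩
  obtain ⟨j, rfl⟩ := (hinj.bijective_of_nat_card_le hcard).2 k
  rw [huniq i j _ hik (hg j)]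

theorem Pi.eq_single_of_forall_ne {α R : Type*} [DecidableEq α] [Zero R] {u : α → R} {k : α}
    (h : ∀ j, j ≠ k → u j = 0) : u = Pi.single k (u k) := by
  funext j
  by_cases hj : j = k
  · subst hj; simp
  · simp [hj, h j hj]

theorem dotProduct_eq_zero_iff_of_nonneg {α R : Type*} [Fintype α] [Semiring R] [PartialOrder R]
    [IsOrderedRing R] [NoZeroDivisors R] {u w : α → R} (hu : 0 ≤ u) (hw : 0 ≤ w) :
    u ⬝ᵥ w = 0 ↔ ∀ k, u k = 0 ∨ w k = 0 := by
  simp only [dotProduct, Finset.sum_eq_zero_iff_of_nonneg fun k _ => mul_nonneg (hu k) (hw k),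
    Finset.mem_univ, true_implies, mul_eq_zero]

theorem exists_eq_single_of_orthogonal_of_nonneg {ι κ α : Type*} [Nonempty κ] [Fintype α]
    [DecidableEq α] (hcard : Nat.card α ≤ Nat.card ι) (u : ι → κ → α → ℝ) (d : ι → κ → ℝ)
    (hu : ∀ i a, 0 ≤ u i a) (hd : ∀ i a, 0 < d i a)
    (horth : ∀ i j, i ≠ j → ∀ a b, u i a ⬝ᵥ u j b = 0)
    (hnorm : ∀ i a, u i a ⬝ᵥ u i a = d i a ^ 2) :
    ∃ g : ι → α, ∀ i a, u i a = Pi.single (g i) (d i a) := by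
  have hne : ∀ i a, u i a ≠ 0 := fun i a h0 => by
    have := hnorm i a
    simp only [h0, dotProduct_zero] at this
    exact (pow_pos (hd i a) 2).ne this
  obtain ⟨g, hg⟩ := exists_forall_iff_eq_of_card_le (fun i k => ∃ a, u i a k ≠ 0) hcard
    (fun i => by
      obtain ⟨k, hk⟩ := Function.ne_iff.1 (hne i (Classical.arbitrary κ))
      exact ⟨k, _, hk⟩)
    (fun i j k ⟨a, ha⟩ ⟨b, hb⟩ => by
      by_contra hij
      exact ((dotProduct_eq_zero_iff_of_nonneg (hu i a) (hu j b)).1 (horth i j hij a b) k).elim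
        ha hb)
  refine ⟨g, fun i a => ?_⟩
  have hsingle : u i a = Pi.single (g i) (u i a (g i)) :=
    Pi.eq_single_of_forall_ne fun k hk => by
      by_contra h
      exact hk ((hg i k).1 ⟨a, h⟩)
  have hsq : u i a (g i) ^ 2 = d i a ^ 2 := by
    rw [← hnorm, hsingle, single_dotProduct, Pi.single_eq_same, sq]
  rw [hsingle, (sq_eq_sq₀ (hu i a (g i)) (hd i a).le).1 hsq]

theorem eq_of_forall_dotProduct_eq {m K : Type*} [Fintype m] [DecidableEq m] [Field K]
    {b : m → m → K} (hb : LinearIndependent K b) {y z : m → K}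
    (h : ∀ a, b a ⬝ᵥ y = b a ⬝ᵥ z) : y = z :=
  mulVec_injective_iff_isUnit.mpr (linearIndependent_rows_iff_isUnit.mp hb) (funext h)

section Circulant

variable {n : ℕ} [NeZero n]

theorem circMat_mulVec_apply (v y : Fin n → ℝ) (k : Fin n) :
    (circMat v *ᵥ y) k = v ⬝ᵥ fun j => y (j + k) := by
  simp only [mulVec, dotProduct, circMat]
  exact (Equiv.sum_comp (Equiv.addRight k) _).symm.trans (by simp)

theorem circMat_mulVec_comm (v x : Fin n → ℝ) (k : Fin n) :
    (circMat v *ᵥ x) k = (circMat x *ᵥ v) (-k) := by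
  simp only [mulVec, dotProduct, circMat]
  rw [← Equiv.sum_comp (Equiv.addRight k)]
  simp only [Equiv.coe_addRight, add_sub_cancel_right, sub_neg_eq_add]
  exact Finset.sum_congr rfl fun j _ => mul_comm _ _

open Fin.NatCast in
theorem cycShift_iterate_apply (x : Fin n → ℝ) (m : ℕ) (j : Fin n) :
    cycShift^[m] x j = x (j - m) := by
  induction m generalizing j with
  | zero => simp
  | succ m ih =>
    rw [Function.iterate_succ_apply', cycShift, ih]
    congr 1
    push_cast
    abel

end Circulant

section Relu

variable {n : ℕ}

theorem reluVec_nonneg (w : Fin n → ℝ) : 0 ≤ reluVec w := fun _ => le_max_right _ _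

theorem reluVec_eq_single {w : Fin n → ℝ} {k : Fin n} (hk : 0 < w k)
    (h : ∀ j, j ≠ k → w j < 0) : reluVec w = Pi.single k (w k) :=
  (Pi.eq_single_of_forall_ne fun j hj => max_eq_right (h j hj).le).trans
    (congrArg (Pi.single k) (max_eq_left hk.le))

theorem eq_of_reluVec_apply_eq {w : Fin n → ℝ} {k : Fin n} {c : ℝ} (hc : 0 < c)
    (h : reluVec w k = c) : w k = c :=
  (max_eq_iff.1 h).elim And.left fun h' => absurd h'.1 hc.ne

theorem reluVec_circMat_mulVec_of_mem_Pset [NeZero n] {i : Fin n} {x v : Fin n → ℝ}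
    (hv : v ∈ Pset i x) : reluVec (circMat v *ᵥ x) = Pi.single (-i) ((circMat x *ᵥ v) i) := by
  have hcomm : ∀ k, (circMat v *ᵥ x) k = (circMat x *ᵥ v) (-k) := circMat_mulVec_comm v x
  rw [reluVec_eq_single (by rw [hcomm, neg_neg]; exact hv.1), hcomm, neg_neg]
  intro j hj
  rw [hcomm]
  exact hv.2 _ fun h => hj (by rw [← h, neg_neg])

end Relu

theorem stmt18 (n : ℕ) [NeZero n] (x : Fin n → ℝ)
    (v : Fin n → Fin n → (Fin n → ℝ))
    (hv : ∀ i a, v i a ∈ Pset i x)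
    (hli : ∀ i, LinearIndependent ℝ (v i))
    (G : (Fin n → ℝ) → (Fin n × Fin n) → (Fin n × Fin n) → ℝ)
    (hG : ∀ z p q, G z p q =
      reluVec ((circMat (v p.1 p.2)).mulVec z) ⬝ᵥ
        reluVec ((circMat (v q.1 q.2)).mulVec z))
    (y : Fin n → ℝ) (hxy : G y = G x) :
    ∃ m : ℕ, y = cycShift^[m] x := by
  set d : Fin n → Fin n → ℝ := fun i a => (circMat x *ᵥ v i a) i
  set u : Fin n → Fin n → Fin n → ℝ := fun i a => reluVec (circMat (v i a) *ᵥ y)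
  have hgram : ∀ i a j b,
      u i a ⬝ᵥ u j b = Pi.single (-i) (d i a) ⬝ᵥ Pi.single (-j) (d j b) := fun i a j b => by
    rw [← reluVec_circMat_mulVec_of_mem_Pset (hv i a),
      ← reluVec_circMat_mulVec_of_mem_Pset (hv j b), ← hG x (i, a) (j, b), ← hxy, hG]
  obtain ⟨g, hg⟩ := exists_eq_single_of_orthogonal_of_nonneg le_rfl u d
    (fun i a => reluVec_nonneg _) (fun i a => (hv i a).1)
    (fun i j hij a b => by simp [hgram, hij]) (fun i a => by simp [hgram, sq])
  have hshift : ∀ a, v 0 a ⬝ᵥ (fun j => y (j + g 0)) = v 0 a ⬝ᵥ x := fun a => by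
    have hval : (circMat (v 0 a) *ᵥ y) (g 0) = d 0 a :=
      eq_of_reluVec_apply_eq (hv 0 a).1 ((congrFun (hg 0 a) (g 0)).trans (Pi.single_eq_same _ _))
    rw [← circMat_mulVec_apply, hval]
    exact (circMat_mulVec_apply x (v 0 a) 0).trans (by simp [dotProduct_comm])
  have hx := eq_of_forall_dotProduct_eq (hli 0) hshift
  refine ⟨g 0, funext fun j => ?_⟩
  rw [cycShift_iterate_apply, Fin.cast_val_eq_self, ← hx]
  simp
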